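/- Any function f belonging to the feasible set, i.e., f is γ*-Lipschitz and |u_k − f(ω_k)| ≤ δ for all data points k, satisfies f̲(ω) ≤ f(ω) ≤ f̄(ω) for every ω; moreover f̄ itself satisfies |u_k − f̄(ω_k)| ≤ δ at each data point (so f̄ is consistent with the data). -/

import Mathlib

namespace SetMembership

variable {E ι : Type*} [SeminormedAddCommGroup E]

/-- The paper's `f̄`. -/
noncomputable def upperBound (s : Finset ι) (hs : s.Nonempty) (u : ι → ℝ) (ω : ι → E)
    (γ δ : ℝ) (x : E) : ℝ :=
  s.inf' hs fun k => u k + δ + γ * ‖x - ω k‖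

/-- The paper's `f̲`. -/
noncomputable def lowerBound (s : Finset ι) (hs : s.Nonempty) (u : ι → ℝ) (ω : ι → E)
    (γ δ : ℝ) (x : E) : ℝ :=
  s.sup' hs fun k => u k - δ - γ * ‖x - ω k‖

variable {s : Finset ι} {hs : s.Nonempty} {u : ι → ℝ} {ω : ι → E} {γ δ : ℝ} {f : E → ℝ}

lemma le_upperBound (hLip : ∀ x y, |f x - f y| ≤ γ * ‖x - y‖)
    (hdata : ∀ k ∈ s, |u k - f (ω k)| ≤ δ) (x : E) : f x ≤ upperBound s hs u ω γ δ x := by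
  refine Finset.le_inf' _ _ fun k hk => ?_
  have hfk : f (ω k) ≤ u k + δ := by linarith [(abs_sub_le_iff.mp (hdata k hk)).2]
  have hfx : f x - f (ω k) ≤ γ * ‖x - ω k‖ := (le_abs_self _).trans (hLip x (ω k))
  linarith

lemma lowerBound_le (hLip : ∀ x y, |f x - f y| ≤ γ * ‖x - y‖)
    (hdata : ∀ k ∈ s, |u k - f (ω k)| ≤ δ) (x : E) : lowerBound s hs u ω γ δ x ≤ f x := by
  refine Finset.sup'_le _ _ fun k hk => ?_
  have hfk : u k - δ ≤ f (ω k) := by linarith [(abs_sub_le_iff.mp (hdata k hk)).1]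
  have hfx : f (ω k) - f x ≤ γ * ‖x - ω k‖ :=
    (le_abs_self _).trans ((abs_sub_comm _ _).trans_le (hLip x (ω k)))
  linarith

lemma upperBound_le_of_mem {k : ι} (hk : k ∈ s) : upperBound s hs u ω γ δ (ω k) ≤ u k + δ :=
  (Finset.inf'_le _ hk).trans_eq (by simp)

/-- `f̄` is itself consistent with the data: it lies between a feasible `f` and the cone at `k`. -/
lemma abs_sub_upperBound_le (hLip : ∀ x y, |f x - f y| ≤ γ * ‖x - y‖)
    (hdata : ∀ k ∈ s, |u k - f (ω k)| ≤ δ) {k : ι} (hk : k ∈ s) :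
    |u k - upperBound s hs u ω γ δ (ω k)| ≤ δ := by
  have hf : f (ω k) ≤ upperBound s hs u ω γ δ (ω k) := le_upperBound hLip hdata (ω k)
  have hfk : u k - δ ≤ f (ω k) := by linarith [(abs_sub_le_iff.mp (hdata k hk)).1]
  have hk' : upperBound s hs u ω γ δ (ω k) ≤ u k + δ := upperBound_le_of_mem hk
  rw [abs_sub_le_iff]
  constructor <;> linarith

end SetMembership

open SetMembership in
theorem setMembership_sandwich_and_consistency_general
    {n N : ℕ} (hN : 0 < N)
    (f : EuclideanSpace ℝ (Fin n) → ℝ) (γ δ : ℝ)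
    (hLip : ∀ ω₁ ω₂, |f ω₁ - f ω₂| ≤ γ * ‖ω₁ - ω₂‖)
    (ω : Fin N → EuclideanSpace ℝ (Fin n)) (u : Fin N → ℝ)
    (hdata : ∀ k, |u k - f (ω k)| ≤ δ) :
    (∀ x, (Finset.univ.sup' (Finset.univ_nonempty_iff.mpr ⟨⟨0, hN⟩⟩)
        (fun k => u k - δ - γ * ‖x - ω k‖)) ≤ f x ∧
      f x ≤ (Finset.univ.inf' (Finset.univ_nonempty_iff.mpr ⟨⟨0, hN⟩⟩)
        (fun k => u k + δ + γ * ‖x - ω k‖))) ∧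
    (∀ k, |u k - (Finset.univ.inf' (Finset.univ_nonempty_iff.mpr ⟨⟨0, hN⟩⟩)
        (fun j => u j + δ + γ * ‖ω k - ω j‖))| ≤ δ) := by
  have hdata' : ∀ k ∈ Finset.univ, |u k - f (ω k)| ≤ δ := fun k _ => hdata k
  exact ⟨fun x => ⟨lowerBound_le hLip hdata' x, le_upperBound hLip hdata' x⟩,
    fun k => abs_sub_upperBound_le hLip hdata' (Finset.mem_univ k)⟩

/-- Any feasible function is sandwiched between the set-membership bounds, and
the upper bound itself is consistent with the data. -/
theorem setMembership_sandwich_and_consistency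
    {n N : ℕ} (hN : 0 < N)
    (f : EuclideanSpace ℝ (Fin n) → ℝ) (γ δ : ℝ)
    (hγ : 0 ≤ γ) (hδ : 0 ≤ δ)
    (hLip : ∀ ω₁ ω₂, |f ω₁ - f ω₂| ≤ γ * ‖ω₁ - ω₂‖)
    (ω : Fin N → EuclideanSpace ℝ (Fin n)) (u : Fin N → ℝ)
    (hdata : ∀ k, |u k - f (ω k)| ≤ δ) :
    (∀ x, (Finset.univ.sup' (Finset.univ_nonempty_iff.mpr ⟨⟨0, hN⟩⟩)
        (fun k => u k - δ - γ * ‖x - ω k‖)) ≤ f x ∧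
      f x ≤ (Finset.univ.inf' (Finset.univ_nonempty_iff.mpr ⟨⟨0, hN⟩⟩)
        (fun k => u k + δ + γ * ‖x - ω k‖))) ∧
    (∀ k, |u k - (Finset.univ.inf' (Finset.univ_nonempty_iff.mpr ⟨⟨0, hN⟩⟩)
        (fun j => u j + δ + γ * ‖ω k - ω j‖))| ≤ δ) :=
  setMembership_sandwich_and_consistency_general hN f γ δ hLip ω u hdata
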